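/- arXiv:2507.23102 — 3 statements merged into one kernel-verified Lean document; each statement's English description precedes it below -/
import Mathlib

section
/- Let 𝒱 ⊆ W satisfy condition (⋆) and let s be a sign function for 𝒱. Then the associated differential satisfies d ∘ d = 0; consequently (C^•𝒱, d) is a cochain complex. -/
open Finset
open scoped RealInnerProductSpace

noncomputable section

variable {E : Type*} [NormedAddCommGroup E] [InnerProductSpace ℝ E] [FiniteDimensional ℝ E]

/-- The orthogonal reflection `σ_α` in the hyperplane orthogonal to `α`; for `α ≠ 0` it is
given by the formula `σ_α v = v - (2⟪v,α⟫/⟪α,α⟫) • α`. -/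
noncomputable def sigmaRefl (α : E) : E ≃ₗᵢ[ℝ] E :=
  Submodule.reflection (ℝ ∙ α)ᗮ

/-- The Weyl group `W`: the subgroup of the orthogonal group of `E` generated by the
reflections `σ_α` for `α ∈ Φ`. -/
def Weyl (Φ : Finset E) : Subgroup (E ≃ₗᵢ[ℝ] E) :=
  Subgroup.closure {g | ∃ α ∈ Φ, g = sigmaRefl α}

variable [DecidableEq E]

/-- `Φ⁻ = -Φ⁺`. -/
def negSet (Pos : Finset E) : Finset E := Pos.image (fun x => -x)

/-- Length `l(w) = #(Φ⁺ ∩ wΦ⁻)`. -/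
def len (Pos : Finset E) (w : E ≃ₗᵢ[ℝ] E) : ℕ :=
  (Pos ∩ (negSet Pos).image w).card

/-- Compact length `l_K(w) = #(Φ⁺ ∩ wΦ⁻ ∩ Φ_K)`. -/
def lenK (Pos ΦK : Finset E) (w : E ≃ₗᵢ[ℝ] E) : ℕ :=
  (Pos ∩ (negSet Pos).image w ∩ ΦK).card

/-- `x → y` iff `x = σ_α y` for some `α ∈ Φ` and `l(x) = l(y) + 1`. -/
def Arrow (Φ Pos : Finset E) (x y : E ≃ₗᵢ[ℝ] E) : Prop :=
  (∃ α ∈ Φ, x = sigmaRefl α * y) ∧ len Pos x = len Pos y + 1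

/-- Bruhat order: `x < y` iff there is a chain `y → u₁ → ⋯ → u_k → x`. -/
def BruhatLT (Φ Pos : Finset E) (x y : E ≃ₗᵢ[ℝ] E) : Prop :=
  Relation.TransGen (Arrow Φ Pos) y x

/-- Condition `(⋆)`: for all `w₁, w₂ ∈ 𝒱` with `l(w₁) = l(w₂) + 2`, the set
`{w ∈ 𝒱 : w₂ < w < w₁}` has either `0` or `2` elements. -/
def StarCond (Φ Pos : Finset E) (V : Set (E ≃ₗᵢ[ℝ] E)) : Prop :=
  ∀ w₁ ∈ V, ∀ w₂ ∈ V, len Pos w₁ = len Pos w₂ + 2 →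
    ({w ∈ V | BruhatLT Φ Pos w₂ w ∧ BruhatLT Φ Pos w w₁}.ncard = 0 ∨
      {w ∈ V | BruhatLT Φ Pos w₂ w ∧ BruhatLT Φ Pos w w₁}.ncard = 2)

/-- A sign function for `𝒱`: `s(x,y) ∈ {1, -1}` whenever `x → y`, `s(x,y) = 0` whenever
`x → y` fails, and `s(x,w)s(w,y) + s(x,w')s(w',y) = 0` for distinct `w, w' ∈ 𝒱` with
`x → w → y` and `x → w' → y`. -/
def IsSignFunction (Φ Pos : Finset E) (V : Set (E ≃ₗᵢ[ℝ] E))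
    (s : (E ≃ₗᵢ[ℝ] E) → (E ≃ₗᵢ[ℝ] E) → ℂ) : Prop :=
  (∀ x ∈ V, ∀ y ∈ V, Arrow Φ Pos x y → (s x y = 1 ∨ s x y = -1)) ∧
  (∀ x ∈ V, ∀ y ∈ V, ¬ Arrow Φ Pos x y → s x y = 0) ∧
  (∀ x ∈ V, ∀ y ∈ V, ∀ w ∈ V, ∀ w' ∈ V, w ≠ w' →
    Arrow Φ Pos x w → Arrow Φ Pos w y → Arrow Φ Pos x w' → Arrow Φ Pos w' y →
    s x w * s w y + s x w' * s w' y = 0)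

/-- `C^q𝒱`, realized as the subspace of the free `ℂ`-vector space on `𝒱` consisting of
vectors supported on basis elements of length `q`. -/
def CqSub (Pos : Finset E) (V : Finset (E ≃ₗᵢ[ℝ] E)) (q : ℤ) :
    Submodule ℂ (↥V →₀ ℂ) :=
  Finsupp.supported ℂ ℂ {v : ↥V | (len Pos ↑v : ℤ) = q}

/-- The differential: on a basis element `y ∈ 𝒱`, `d(y) = Σ_{x ∈ 𝒱} s(x,y)·x`
(which is `Σ_{x ∈ 𝒱, x → y} s(x,y)·x` when `s` is a sign function, since then `s(x,y) = 0`
unless `x → y`). -/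
noncomputable def totalDiff (V : Finset (E ≃ₗᵢ[ℝ] E))
    (s : (E ≃ₗᵢ[ℝ] E) → (E ≃ₗᵢ[ℝ] E) → ℂ) : (↥V →₀ ℂ) →ₗ[ℂ] (↥V →₀ ℂ) :=
  Finsupp.lsum ℂ fun y => ∑ x : ↥V, s ↑x ↑y • Finsupp.lsingle x

/-!
Expanding `d (d y)` gives `∑ₓ (∑_w s(x,w) s(w,y)) x`. Since `s` vanishes off arrows, only the
`w` with `x → w → y` contribute, and as lengths go up by one along each arrow these are exactly
the elements of `𝒱` strictly between `y` and `x` in the Bruhat order. By `(⋆)` there are none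
or two of them, and the two contributions cancel by the sign rule.
-/

namespace BruhatLT

omit [FiniteDimensional ℝ E]

variable {Φ Pos : Finset E}

lemma len_lt {x y : E ≃ₗᵢ[ℝ] E} (h : BruhatLT Φ Pos x y) :
    len Pos x < len Pos y := by
  induction h with
  | single h => have := h.2; omega
  | tail _ h _ => have := h.2; omega

lemma arrow_of_len_eq_succ {x y : E ≃ₗᵢ[ℝ] E} (h : BruhatLT Φ Pos x y)
    (hl : len Pos y = len Pos x + 1) : Arrow Φ Pos y x := by
  cases h with
  | single h => exact h
  | tail hyb hbx => have := len_lt hyb; have := hbx.2; omega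

lemma and_bruhatLT_iff_arrow_and_arrow {x y w : E ≃ₗᵢ[ℝ] E} (hl : len Pos x = len Pos y + 2) :
    BruhatLT Φ Pos y w ∧ BruhatLT Φ Pos w x ↔ Arrow Φ Pos x w ∧ Arrow Φ Pos w y := by
  refine ⟨fun ⟨hyw, hwx⟩ => ?_, fun ⟨hxw, hwy⟩ => ⟨.single hwy, .single hxw⟩⟩
  have := hyw.len_lt
  have := hwx.len_lt
  exact ⟨hwx.arrow_of_len_eq_succ (by omega), hyw.arrow_of_len_eq_succ (by omega)⟩

end BruhatLT

namespace IsSignFunction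

omit [FiniteDimensional ℝ E]

variable {Φ Pos : Finset E} {V : Finset (E ≃ₗᵢ[ℝ] E)} {s : (E ≃ₗᵢ[ℝ] E) → (E ≃ₗᵢ[ℝ] E) → ℂ}

lemma len_eq_succ_of_ne_zero (hs : IsSignFunction Φ Pos ↑V s) {x y : ↥V} (hxy : s x y ≠ 0) :
    len Pos x = len Pos y + 1 := by
  by_contra h
  exact hxy (hs.2.1 x x.2 y y.2 fun hA => h hA.2)

lemma sum_mul_eq_zero (hV : StarCond Φ Pos ↑V) (hs : IsSignFunction Φ Pos ↑V s) (x y : ↥V) :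
    ∑ w : ↥V, s x w * s w y = 0 := by
  classical
  set T := univ.filter fun w : ↥V => Arrow Φ Pos x w ∧ Arrow Φ Pos w y with hT
  have hsum : ∑ w ∈ T, s x w * s w y = ∑ w : ↥V, s x w * s w y := by
    refine sum_filter_of_ne fun w _ hw => ?_
    by_contra h
    rcases not_and_or.1 h with hxw | hwy
    · exact hw (by rw [hs.2.1 x x.2 w w.2 hxw, zero_mul])
    · exact hw (by rw [hs.2.1 w w.2 y y.2 hwy, mul_zero])
  rw [← hsum]
  obtain hT₀ | ⟨w₀, hw₀⟩ := T.eq_empty_or_nonempty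
  · rw [hT₀, sum_empty]
  obtain ⟨hxw₀, hw₀y⟩ := (mem_filter.1 hw₀).2
  have hl : len Pos x = len Pos y + 2 := by have := hxw₀.2; have := hw₀y.2; omega
  have hinterval : {w ∈ (V : Set (E ≃ₗᵢ[ℝ] E)) | BruhatLT Φ Pos y w ∧ BruhatLT Φ Pos w x} =
      Subtype.val '' (T : Set ↥V) := by
    ext w
    simp [BruhatLT.and_bruhatLT_iff_arrow_and_arrow hl, hT, and_comm]
  have hcard := hV x x.2 y y.2 hl
  rw [hinterval, Set.ncard_image_of_injective _ Subtype.val_injective, Set.ncard_coe_finset]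
    at hcard
  obtain hcard | hcard := hcard
  · exact absurd hcard (card_ne_zero.2 ⟨w₀, hw₀⟩)
  obtain ⟨a, b, hab, hTab⟩ := card_eq_two.1 hcard
  have ha : a ∈ T := hTab ▸ mem_insert_self a {b}
  have hb : b ∈ T := hTab ▸ mem_insert_of_mem (mem_singleton_self b)
  rw [hTab, sum_pair hab]
  exact hs.2.2 x x.2 y y.2 a a.2 b b.2 (Subtype.coe_injective.ne hab)
    (mem_filter.1 ha).2.1 (mem_filter.1 ha).2.2 (mem_filter.1 hb).2.1 (mem_filter.1 hb).2.2

end IsSignFunction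

section totalDiff

omit [FiniteDimensional ℝ E]

variable {V : Finset (E ≃ₗᵢ[ℝ] E)} {s : (E ≃ₗᵢ[ℝ] E) → (E ≃ₗᵢ[ℝ] E) → ℂ}

omit [DecidableEq E] in
lemma totalDiff_single (y : ↥V) (c : ℂ) :
    totalDiff V s (Finsupp.single y c) = ∑ x : ↥V, s x y • Finsupp.single x c := by
  simp [totalDiff]

omit [DecidableEq E] in
lemma totalDiff_comp_self_eq_zero (h : ∀ x y : ↥V, ∑ w : ↥V, s x w * s w y = 0) :
    totalDiff V s ∘ₗ totalDiff V s = 0 := by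
  refine Finsupp.lhom_ext fun y c => ?_
  calc totalDiff V s (totalDiff V s (Finsupp.single y c))
      = ∑ w : ↥V, ∑ x : ↥V, (s x w * s w y) • Finsupp.single x c := by
        simp only [totalDiff_single, map_sum, map_smul, smul_sum, smul_smul, mul_comm]
    _ = ∑ x : ↥V, (∑ w : ↥V, s x w * s w y) • Finsupp.single x c := by
        rw [sum_comm]; simp only [sum_smul]
    _ = 0 := by simp only [h, zero_smul, sum_const_zero]

lemma map_totalDiff_cqSub_le {Pos : Finset E}
    (hs : ∀ x y : ↥V, s x y ≠ 0 → len Pos x = len Pos y + 1) (q : ℤ) :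
    (CqSub Pos V q).map (totalDiff V s) ≤ CqSub Pos V (q + 1) := by
  rw [Submodule.map_le_iff_le_comap, CqSub, Finsupp.supported_eq_span_single, Submodule.span_le]
  rintro _ ⟨y, hy, rfl⟩
  simp only [SetLike.mem_coe, Submodule.mem_comap, totalDiff_single]
  refine Submodule.sum_mem _ fun x _ => ?_
  by_cases hxy : s x y = 0
  · rw [hxy, zero_smul]; exact Submodule.zero_mem _
  refine Submodule.smul_mem _ _ (Finsupp.single_mem_supported ℂ _ ?_)
  have hy : (len Pos y : ℤ) = q := hy
  change (len Pos x : ℤ) = q + 1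
  rw [hs x y hxy]; omega

end totalDiff

theorem statement6_general
    (Φ : Finset E)
    (Pos : Finset E)
    (V : Finset (E ≃ₗᵢ[ℝ] E))
    (hV : StarCond Φ Pos ↑V)
    (s : (E ≃ₗᵢ[ℝ] E) → (E ≃ₗᵢ[ℝ] E) → ℂ) (hs : IsSignFunction Φ Pos ↑V s) :
    totalDiff V s ∘ₗ totalDiff V s = 0 ∧
    ∀ q : ℤ, (CqSub Pos V q).map (totalDiff V s) ≤ CqSub Pos V (q + 1) :=
  ⟨totalDiff_comp_self_eq_zero (hs.sum_mul_eq_zero hV),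
    map_totalDiff_cqSub_le fun _ _ => hs.len_eq_succ_of_ne_zero⟩

theorem statement6
    (Φ : Finset E) (h0 : (0 : E) ∉ Φ)
    (hrefl : ∀ α ∈ Φ, Φ.image (sigmaRefl α) = Φ)
    (hred : ∀ α ∈ Φ, {x : E | x ∈ Φ ∧ ∃ t : ℝ, x = t • α} = {α, -α})
    (f : E) (hf : ∀ α ∈ Φ, ⟪f, α⟫ ≠ 0)
    (Pos : Finset E) (hPos : Pos = Φ.filter fun α => 0 < ⟪f, α⟫)
    (V : Finset (E ≃ₗᵢ[ℝ] E)) (hVW : ↑V ⊆ (Weyl Φ : Set (E ≃ₗᵢ[ℝ] E)))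
    (hV : StarCond Φ Pos ↑V)
    (s : (E ≃ₗᵢ[ℝ] E) → (E ≃ₗᵢ[ℝ] E) → ℂ) (hs : IsSignFunction Φ Pos ↑V s) :
    totalDiff V s ∘ₗ totalDiff V s = 0 ∧
    ∀ q : ℤ, (CqSub Pos V q).map (totalDiff V s) ≤ CqSub Pos V (q + 1) :=
  statement6_general Φ Pos V hV s hs

end
end

section
/- Let w₀ ∈ W satisfy w₀Φ⁺ = Φ⁻, let 𝒱 ⊆ W satisfy condition (⋆), let s be a sign function for 𝒱, and equip 𝒱·w₀ with the transposed sign function s′(x·w₀, y·w₀) = s(y, x). Then for every integer k, dim_ℂ H^k(𝒱) = dim_ℂ H^{N−k}(𝒱·w₀). -/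
open Finset
open scoped RealInnerProductSpace

noncomputable section

variable {E : Type*} [NormedAddCommGroup E] [InnerProductSpace ℝ E] [FiniteDimensional ℝ E]

variable [DecidableEq E]

/-- Cocycles in degree `q`: the elements of `C^q𝒱` lying in `ker d`. -/
noncomputable def Zq (Pos : Finset E) (V : Finset (E ≃ₗᵢ[ℝ] E))
    (s : (E ≃ₗᵢ[ℝ] E) → (E ≃ₗᵢ[ℝ] E) → ℂ) (q : ℤ) : Submodule ℂ (↥V →₀ ℂ) :=
  CqSub Pos V q ⊓ LinearMap.ker (totalDiff V s)

/-- Coboundaries in degree `q`: `im(d : C^{q-1}𝒱 → C^q𝒱)`. -/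
noncomputable def Bfull (Pos : Finset E) (V : Finset (E ≃ₗᵢ[ℝ] E))
    (s : (E ≃ₗᵢ[ℝ] E) → (E ≃ₗᵢ[ℝ] E) → ℂ) (q : ℤ) : Submodule ℂ (↥V →₀ ℂ) :=
  (CqSub Pos V (q - 1)).map (totalDiff V s)

/-- `H^q(𝒱) = ker(d : C^q → C^{q+1}) / im(d : C^{q-1} → C^q)`, realized as the image of the
cocycles in the quotient by the coboundaries (for a cochain complex this image is canonically
isomorphic to the usual quotient `ker d / im d`). -/
noncomputable def cohomology (Pos : Finset E) (V : Finset (E ≃ₗᵢ[ℝ] E))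
    (s : (E ≃ₗᵢ[ℝ] E) → (E ≃ₗᵢ[ℝ] E) → ℂ) (q : ℤ) :
    Submodule ℂ ((↥V →₀ ℂ) ⧸ Bfull Pos V s q) :=
  (Zq Pos V s q).map (Bfull Pos V s q).mkQ

/-- `dim_ℂ H^q(𝒱)`. -/
noncomputable def cohomDim (Pos : Finset E) (V : Finset (E ≃ₗᵢ[ℝ] E))
    (s : (E ≃ₗᵢ[ℝ] E) → (E ≃ₗᵢ[ℝ] E) → ℂ) (q : ℤ) : ℕ :=
  Module.finrank ℂ ↥(cohomology Pos V s q)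

/-!
Write `C^•(𝒱) = ℂ^𝒱`, graded by length, with differential given by the matrix `A = (s(x,y))`.
Condition (⋆) and the sign rule make `A² = 0`: the length-two paths from `y` to `x` come in
pairs of opposite sign. By rank–nullity, `dim H^q = #{l = q} - rank d|_{C^q} - rank d|_{C^{q-1}}`.
Right multiplication by `w₀` is a bijection `𝒱 → 𝒱w₀` with `l(vw₀) = N - l(v)` (as `w₀Φ⁺ = Φ⁻`)
carrying the differential of `𝒱w₀` to `Aᵀ`; since transposing preserves ranks, the three
terms for `H^k(𝒱)` and `H^{N-k}(𝒱w₀)` agree.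
-/

namespace MatrixComplex

open Module Matrix

variable {K ι : Type*} [Field K] [Fintype ι]

def gradedPiece (L : ι → ℤ) (q : ℤ) : Submodule K (ι →₀ K) :=
  Finsupp.supported K K {i | L i = q}

def matrixDiff (A : Matrix ι ι K) : (ι →₀ K) →ₗ[K] (ι →₀ K) :=
  Finsupp.lsum K fun y => ∑ x : ι, A x y • Finsupp.lsingle x

def cocycles (L : ι → ℤ) (A : Matrix ι ι K) (q : ℤ) : Submodule K (ι →₀ K) :=
  gradedPiece L q ⊓ LinearMap.ker (matrixDiff A)

def coboundaries (L : ι → ℤ) (A : Matrix ι ι K) (q : ℤ) : Submodule K (ι →₀ K) :=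
  (gradedPiece L (q - 1)).map (matrixDiff A)

def cohomologyDim (L : ι → ℤ) (A : Matrix ι ι K) (q : ℤ) : ℕ :=
  finrank K ((cocycles L A q).map (coboundaries L A q).mkQ)

def IsGraded (L : ι → ℤ) (A : Matrix ι ι K) : Prop :=
  ∀ i j, A i j ≠ 0 → L i = L j + 1

lemma coe_matrixDiff (A : Matrix ι ι K) (g : ι →₀ K) : ⇑(matrixDiff A g) = A *ᵥ ⇑g := by
  classical
  induction g using Finsupp.induction_linear with
  | zero => simp
  | add f g hf hg => simp [hf, hg, mulVec_add]
  | single y c =>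
    funext i
    simp [matrixDiff, Finsupp.finsetSum_apply, Finsupp.single_apply, mulVec, dotProduct,
      mul_comm]

lemma matrixDiff_comp_matrixDiff {A : Matrix ι ι K} (hA : A * A = 0) (g : ι →₀ K) :
    matrixDiff A (matrixDiff A g) = 0 :=
  DFunLike.coe_injective <| by simp [coe_matrixDiff, mulVec_mulVec, hA]

lemma coboundaries_le_cocycles {L : ι → ℤ} {A : Matrix ι ι K} (hL : IsGraded L A)
    (hA : A * A = 0) (q : ℤ) : coboundaries L A q ≤ cocycles L A q := by
  rintro _ ⟨g, hg, rfl⟩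
  refine ⟨?_, matrixDiff_comp_matrixDiff hA g⟩
  rw [gradedPiece, SetLike.mem_coe, Finsupp.mem_supported']
  intro i hi
  rw [coe_matrixDiff]
  refine Finset.sum_eq_zero fun j _ => ?_
  by_contra hij
  obtain ⟨hAij, hgj⟩ := mul_ne_zero_iff.mp hij
  have hj : L j = q - 1 := (Finsupp.mem_supported K g).mp hg (Finsupp.mem_support_iff.mpr hgj)
  exact hi (show L i = q by have := hL i j hAij; omega)

lemma finrank_map_add_finrank_inf_ker {M N : Type*} [AddCommGroup M] [Module K M]
    [FiniteDimensional K M] [AddCommGroup N] [Module K N] (p : Submodule K M) (f : M →ₗ[K] N) :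
    finrank K (p.map f) + finrank K ↥(p ⊓ LinearMap.ker f) = finrank K p := by
  have h := LinearMap.finrank_range_add_finrank_ker (f.domRestrict p)
  rwa [LinearMap.range_domRestrict, LinearMap.ker_domRestrict,
    ← Submodule.finrank_map_subtype_eq, Submodule.map_comap_subtype] at h

lemma finrank_gradedPiece (L : ι → ℤ) (q : ℤ) :
    finrank K (gradedPiece (K := K) L q) = Fintype.card {i // L i = q} := by
  classical
  rw [gradedPiece, LinearEquiv.finrank_eq (Finsupp.supportedEquivFinsupp _),
    finrank_finsupp_self]
  rfl

lemma cohomologyDim_add_finrank_coboundaries {L : ι → ℤ} {A : Matrix ι ι K} (hL : IsGraded L A)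
    (hA : A * A = 0) (q : ℤ) :
    cohomologyDim L A q + finrank K (coboundaries L A (q + 1)) + finrank K (coboundaries L A q) =
      Fintype.card {i // L i = q} := by
  have hH := finrank_map_add_finrank_inf_ker (cocycles L A q) (coboundaries L A q).mkQ
  rw [Submodule.ker_mkQ, inf_eq_right.mpr (coboundaries_le_cocycles hL hA q)] at hH
  have hZ : finrank K (coboundaries L A (q + 1)) + finrank K (cocycles L A q) =
      finrank K (gradedPiece (K := K) L q) := by
    rw [coboundaries, add_sub_cancel_right]
    exact finrank_map_add_finrank_inf_ker _ _
  rw [← finrank_gradedPiece (K := K), cohomologyDim]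
  omega

variable [DecidableEq ι]

def levelProj (L : ι → ℤ) (q : ℤ) : Matrix ι ι K :=
  diagonal fun i => if L i = q then 1 else 0

lemma map_gradedPiece_eq_range (L : ι → ℤ) (q : ℤ) :
    (gradedPiece L q).map (Finsupp.linearEquivFunOnFinite K K ι).toLinearMap =
      LinearMap.range (levelProj L q).mulVecLin := by
  ext f
  constructor
  · rintro ⟨g, hg, rfl⟩
    refine ⟨g, funext fun i => ?_⟩
    by_cases h : L i = q
    · simp [levelProj, mulVec_diagonal, h]
    · simp [levelProj, mulVec_diagonal, h, (Finsupp.mem_supported' K g).mp hg i h]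
  · rintro ⟨g, rfl⟩
    refine ⟨(Finsupp.linearEquivFunOnFinite K K ι).symm ((levelProj L q).mulVecLin g), ?_,
      by simp⟩
    rw [gradedPiece, SetLike.mem_coe, Finsupp.mem_supported']
    intro i hi
    simp [levelProj, mulVec_diagonal, show ¬L i = q from hi]

lemma finrank_coboundaries (L : ι → ℤ) (A : Matrix ι ι K) (q : ℤ) :
    finrank K (coboundaries L A q) = (A * levelProj L (q - 1)).rank := by
  let φ := Finsupp.linearEquivFunOnFinite K K ι
  have hφ : φ.toLinearMap ∘ₗ matrixDiff A = A.mulVecLin ∘ₗ φ.toLinearMap :=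
    LinearMap.ext (coe_matrixDiff A)
  rw [← LinearEquiv.finrank_map_eq φ, rank, mulVecLin_mul, LinearMap.range_comp,
    ← map_gradedPiece_eq_range, ← Submodule.map_comp, ← hφ, Submodule.map_comp, coboundaries]

lemma transpose_mul_levelProj {L : ι → ℤ} {A : Matrix ι ι K} (hL : IsGraded L A) (m : ℤ) :
    Aᵀ * levelProj L m = (A * levelProj L (m - 1))ᵀ := by
  ext i j
  simp only [levelProj, mul_diagonal, transpose_apply]
  rcases eq_or_ne (A j i) 0 with h | h
  · simp [h]
  · have := hL j i h
    exact congrArg _ (if_congr (by omega) rfl rfl)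

variable {ι' : Type*} [Fintype ι'] [DecidableEq ι']

lemma finrank_coboundaries_of_transpose {L : ι → ℤ} {A : Matrix ι ι K} (hL : IsGraded L A)
    {L' : ι' → ℤ} {A' : Matrix ι' ι' K} (e : ι ≃ ι') {N : ℤ} (hL' : ∀ i, L' (e i) = N - L i)
    (hA' : A'.submatrix e e = Aᵀ) (q : ℤ) :
    finrank K (coboundaries L' A' q) = finrank K (coboundaries L A (N - q + 1)) := by
  have hproj : (levelProj (K := K) L' (q - 1)).submatrix e e = levelProj L (N - q + 1) := by
    rw [levelProj, levelProj, submatrix_diagonal_equiv]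
    congr 1
    funext i
    exact if_congr (by simp only [hL']; omega) rfl rfl
  rw [finrank_coboundaries, finrank_coboundaries, ← rank_submatrix (A' * levelProj L' (q - 1)) e e,
    ← submatrix_mul_equiv A' _ e e e, hA', hproj,
    transpose_mul_levelProj hL, rank_transpose]

theorem cohomologyDim_eq_of_transpose {L : ι → ℤ} {A : Matrix ι ι K} (hL : IsGraded L A)
    (hA : A * A = 0) {L' : ι' → ℤ} {A' : Matrix ι' ι' K} (e : ι ≃ ι') {N : ℤ}
    (hL' : ∀ i, L' (e i) = N - L i) (hA' : A'.submatrix e e = Aᵀ) (k : ℤ) :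
    cohomologyDim L A k = cohomologyDim L' A' (N - k) := by
  have hA'eq : A' = Aᵀ.submatrix e.symm e.symm := by
    rw [← hA', submatrix_submatrix]
    simp
  have hL'graded : IsGraded L' A' := by
    intro i' j' h
    obtain ⟨i, rfl⟩ := e.surjective i'
    obtain ⟨j, rfl⟩ := e.surjective j'
    have := hL j i (by simpa [hA'eq] using h)
    rw [hL', hL']
    omega
  have hA'sq : A' * A' = 0 := by
    rw [hA'eq, submatrix_mul_equiv, ← transpose_mul, hA, transpose_zero, submatrix_zero]
    rfl
  have hcard : Fintype.card {i' // L' i' = N - k} = Fintype.card {i // L i = k} :=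
    Fintype.card_congr (e.subtypeEquiv fun i => by rw [hL']; omega).symm
  have h := cohomologyDim_add_finrank_coboundaries hL hA k
  have h' := cohomologyDim_add_finrank_coboundaries hL'graded hA'sq (N - k)
  rw [hcard, finrank_coboundaries_of_transpose hL e hL' hA',
    finrank_coboundaries_of_transpose hL e hL' hA', show N - (N - k + 1) + 1 = k by ring,
    show N - (N - k) + 1 = k + 1 by ring] at h'
  omega

end MatrixComplex

section RootSystem

variable {F : Type*} [NormedAddCommGroup F] [InnerProductSpace ℝ F] [DecidableEq F]
  {Φ Pos : Finset F}

lemma image_eq_of_mem_weyl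
    (hrefl : ∀ α ∈ Φ, Φ.image (sigmaRefl α) = Φ) {g : F ≃ₗᵢ[ℝ] F} (hg : g ∈ Weyl Φ) :
    Φ.image g = Φ := by
  induction hg using Subgroup.closure_induction with
  | mem x hx => obtain ⟨α, hα, rfl⟩ := hx; exact hrefl α hα
  | one => exact Finset.image_id
  | mul x y _ _ hx hy => rw [LinearIsometryEquiv.coe_mul, ← Finset.image_image, hy, hx]
  | inv x _ hx =>
    conv_lhs => rw [← hx]
    rw [Finset.image_image]
    simp

lemma neg_mem_of_image_sigmaRefl_eq
    (hrefl : ∀ α ∈ Φ, Φ.image (sigmaRefl α) = Φ) {α : F} (hα : α ∈ Φ) : -α ∈ Φ := by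
  rw [← hrefl α hα, ← Submodule.reflection_orthogonalComplement_singleton_eq_neg (𝕜 := ℝ)]
  exact Finset.mem_image_of_mem _ hα

lemma filter_union_negSet_filter (hneg : ∀ α ∈ Φ, -α ∈ Φ) {f : F}
    (hf : ∀ α ∈ Φ, ⟪f, α⟫ ≠ 0) :
    Φ.filter (fun α => 0 < ⟪f, α⟫) ∪ negSet (Φ.filter fun α => 0 < ⟪f, α⟫) = Φ := by
  ext α
  simp only [negSet, Finset.mem_union, Finset.mem_filter, Finset.mem_image]
  constructor
  · rintro (⟨hα, -⟩ | ⟨β, ⟨hβ, -⟩, rfl⟩)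
    exacts [hα, hneg β hβ]
  · intro hα
    rcases (hf α hα).lt_or_gt with h | h
    · exact Or.inr ⟨-α, ⟨hneg α hα, by rw [inner_neg_right]; linarith⟩, neg_neg α⟩
    · exact Or.inl ⟨hα, h⟩

lemma disjoint_negSet_of_inner_pos {f : F} (hPos : ∀ α ∈ Pos, 0 < ⟪f, α⟫) :
    Disjoint Pos (negSet Pos) := by
  rw [Finset.disjoint_left]
  intro α hα hα'
  obtain ⟨β, hβ, rfl⟩ := Finset.mem_image.mp hα'
  have := hPos _ hα
  have := hPos β hβ
  rw [inner_neg_right] at *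
  linarith

lemma image_negSet (S : Finset F) (g : F ≃ₗᵢ[ℝ] F) : (negSet S).image g = negSet (S.image g) := by
  simp [negSet, Finset.image_image, Function.comp_def]

/-- Since `gΦ = Φ = Φ⁺ ⊔ Φ⁻`, the set `Φ⁺` splits into `Φ⁺ ∩ gΦ⁺` and `Φ⁺ ∩ gΦ⁻`. -/
lemma card_inter_image_add_len (hunion : Pos ∪ negSet Pos = Φ)
    (hdisj : Disjoint Pos (negSet Pos)) {g : F ≃ₗᵢ[ℝ] F} (hg : Φ.image g = Φ) :
    #(Pos ∩ Pos.image g) + len Pos g = #Pos := by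
  rw [len, ← Finset.card_union_of_disjoint
    (((Finset.disjoint_image g.injective).mpr hdisj).mono inter_subset_right inter_subset_right),
    ← Finset.inter_union_distrib_left, ← Finset.image_union, hunion, hg,
    Finset.inter_eq_left.mpr (hunion ▸ Finset.subset_union_left)]

lemma len_mul_add_len (hunion : Pos ∪ negSet Pos = Φ)
    (hdisj : Disjoint Pos (negSet Pos)) {w₀ : F ≃ₗᵢ[ℝ] F} (hw₀ : Pos.image w₀ = negSet Pos)
    {v : F ≃ₗᵢ[ℝ] F} (hv : Φ.image v = Φ) :
    len Pos (v * w₀) + len Pos v = #Pos := by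
  have hw₀neg : (negSet Pos).image w₀ = Pos := by
    rw [image_negSet, hw₀]
    simp [negSet, Finset.image_image]
  rw [← card_inter_image_add_len hunion hdisj hv, len, LinearIsometryEquiv.coe_mul,
    ← Finset.image_image, hw₀neg]

lemma len_lt_of_transGen {a b : F ≃ₗᵢ[ℝ] F} (h : Relation.TransGen (Arrow Φ Pos) a b) :
    len Pos b < len Pos a := by
  induction h with
  | single h => have := h.2; omega
  | tail _ h ih => have := h.2; omega

lemma arrow_of_transGen_of_len_eq_succ {a b : F ≃ₗᵢ[ℝ] F}
    (h : Relation.TransGen (Arrow Φ Pos) a b) (hl : len Pos a = len Pos b + 1) :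
    Arrow Φ Pos a b := by
  obtain ⟨c, hac, hcb⟩ := Relation.TransGen.head'_iff.mp h
  rcases hcb.cases_head with rfl | ⟨d, hcd, hdb⟩
  · exact hac
  · have := hac.2
    have := len_lt_of_transGen (Relation.TransGen.head' hcd hdb)
    omega

lemma bruhatLT_between_iff_arrow {x y w : F ≃ₗᵢ[ℝ] F} (hxy : len Pos x = len Pos y + 2) :
    BruhatLT Φ Pos y w ∧ BruhatLT Φ Pos w x ↔ Arrow Φ Pos x w ∧ Arrow Φ Pos w y := by
  refine ⟨fun ⟨hyw, hwx⟩ => ?_, fun ⟨hxw, hwy⟩ => ⟨.single hwy, .single hxw⟩⟩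
  have := len_lt_of_transGen hyw
  have := len_lt_of_transGen hwx
  exact ⟨arrow_of_transGen_of_len_eq_succ hwx (by omega),
    arrow_of_transGen_of_len_eq_succ hyw (by omega)⟩

lemma sum_sign_mul_sign_eq_zero {V : Finset (F ≃ₗᵢ[ℝ] F)} (hV : StarCond Φ Pos ↑V)
    {s : (F ≃ₗᵢ[ℝ] F) → (F ≃ₗᵢ[ℝ] F) → ℂ} (hs : IsSignFunction Φ Pos ↑V s)
    {x y : F ≃ₗᵢ[ℝ] F} (hx : x ∈ V) (hy : y ∈ V) :
    ∑ w ∈ V, s x w * s w y = 0 := by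
  classical
  obtain ⟨-, hs_zero, hs_anticomm⟩ := hs
  set S := V.filter fun w => Arrow Φ Pos x w ∧ Arrow Φ Pos w y
  have hsum : ∑ w ∈ V, s x w * s w y = ∑ w ∈ S, s x w * s w y := by
    refine (Finset.sum_filter_of_ne fun w hw hne => ?_).symm
    by_contra h
    rcases not_and_or.mp h with h | h
    · exact hne (by rw [hs_zero x hx w hw h, zero_mul])
    · exact hne (by rw [hs_zero w hw y hy h, mul_zero])
  rw [hsum]
  obtain hS | ⟨w, hw⟩ := S.eq_empty_or_nonempty
  · rw [hS, Finset.sum_empty]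
  obtain ⟨-, hxw, hwy⟩ := Finset.mem_filter.mp hw
  have hxy : len Pos x = len Pos y + 2 := by
    have := hxw.2
    have := hwy.2
    omega
  have hinterval : {w ∈ (↑V : Set (F ≃ₗᵢ[ℝ] F)) |
      BruhatLT Φ Pos y w ∧ BruhatLT Φ Pos w x} = ↑S := by
    ext w
    simp [S, bruhatLT_between_iff_arrow hxy]
  rcases hV x hx y hy hxy with h | h <;> rw [hinterval, Set.ncard_coe_finset] at h
  · exact absurd hw (by simp [Finset.card_eq_zero.mp h])
  obtain ⟨a, b, hab, hSab⟩ := Finset.card_eq_two.mp h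
  obtain ⟨ha, hxa, hay⟩ := Finset.mem_filter.mp (hSab ▸ Finset.mem_insert_self a {b})
  obtain ⟨hb, hxb, hby⟩ :=
    Finset.mem_filter.mp (hSab ▸ Finset.mem_insert_of_mem (Finset.mem_singleton_self b))
  rw [hSab, Finset.sum_pair hab]
  exact hs_anticomm x hx y hy a ha b hb hab hxa hay hxb hby

end RootSystem

theorem statement7_general [DecidableEq (E ≃ₗᵢ[ℝ] E)]
    (Φ : Finset E)
    (hrefl : ∀ α ∈ Φ, Φ.image (sigmaRefl α) = Φ)
    (f : E) (hf : ∀ α ∈ Φ, ⟪f, α⟫ ≠ 0)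
    (Pos : Finset E) (hPos : Pos = Φ.filter fun α => 0 < ⟪f, α⟫)
    (w₀ : E ≃ₗᵢ[ℝ] E) (hw₀ : Pos.image w₀ = negSet Pos)
    (V : Finset (E ≃ₗᵢ[ℝ] E)) (hVW : ↑V ⊆ (Weyl Φ : Set (E ≃ₗᵢ[ℝ] E)))
    (hV : StarCond Φ Pos ↑V)
    (s : (E ≃ₗᵢ[ℝ] E) → (E ≃ₗᵢ[ℝ] E) → ℂ) (hs : IsSignFunction Φ Pos ↑V s) :
    ∀ k : ℤ, cohomDim Pos V s k =
      cohomDim Pos (V.image fun v => v * w₀)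
        (fun u v => s (v * w₀⁻¹) (u * w₀⁻¹)) ((Pos.card : ℤ) - k) := by
  intro k
  have hunion : Pos ∪ negSet Pos = Φ := by
    rw [hPos]
    exact filter_union_negSet_filter (fun α => neg_mem_of_image_sigmaRefl_eq hrefl) hf
  have hdisj : Disjoint Pos (negSet Pos) := disjoint_negSet_of_inner_pos fun α hα => by
    rw [hPos] at hα
    exact (Finset.mem_filter.mp hα).2
  let A : Matrix V V ℂ := Matrix.of fun x y => s x y
  have hgraded : MatrixComplex.IsGraded (fun v : V => (len Pos v : ℤ)) A := fun x y hxy => by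
    by_contra h
    exact hxy (hs.2.1 x x.2 y y.2 fun harrow => h (by simp [harrow.2]))
  have hsq : A * A = 0 := by
    ext x y
    rw [Matrix.mul_apply, Matrix.zero_apply, ← sum_sign_mul_sign_eq_zero hV hs x.2 y.2,
      ← Finset.sum_coe_sort V]
    rfl
  let e : V ≃ V.image fun v => v * w₀ := (Equiv.mulRight w₀).subtypeEquiv fun v => by simp
  -- `cohomDim Pos V s` is `MatrixComplex.cohomologyDim (len Pos ·) A` by definition.
  refine MatrixComplex.cohomologyDim_eq_of_transpose hgraded hsq e (fun v => ?_) ?_ k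
  · have := len_mul_add_len hunion hdisj hw₀ (image_eq_of_mem_weyl hrefl (hVW v.2))
    show (len Pos (v * w₀) : ℤ) = #Pos - len Pos v
    omega
  · ext x y
    exact congrArg₂ s (mul_inv_cancel_right y.1 w₀) (mul_inv_cancel_right x.1 w₀)

theorem statement7 [DecidableEq (E ≃ₗᵢ[ℝ] E)]
    (Φ : Finset E) (h0 : (0 : E) ∉ Φ)
    (hrefl : ∀ α ∈ Φ, Φ.image (sigmaRefl α) = Φ)
    (hred : ∀ α ∈ Φ, {x : E | x ∈ Φ ∧ ∃ t : ℝ, x = t • α} = {α, -α})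
    (f : E) (hf : ∀ α ∈ Φ, ⟪f, α⟫ ≠ 0)
    (Pos : Finset E) (hPos : Pos = Φ.filter fun α => 0 < ⟪f, α⟫)
    (w₀ : E ≃ₗᵢ[ℝ] E) (hw₀W : w₀ ∈ Weyl Φ) (hw₀ : Pos.image w₀ = negSet Pos)
    (V : Finset (E ≃ₗᵢ[ℝ] E)) (hVW : ↑V ⊆ (Weyl Φ : Set (E ≃ₗᵢ[ℝ] E)))
    (hV : StarCond Φ Pos ↑V)
    (s : (E ≃ₗᵢ[ℝ] E) → (E ≃ₗᵢ[ℝ] E) → ℂ) (hs : IsSignFunction Φ Pos ↑V s) :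
    ∀ k : ℤ, cohomDim Pos V s k =
      cohomDim Pos (V.image fun v => v * w₀)
        (fun u v => s (v * w₀⁻¹) (u * w₀⁻¹)) ((Pos.card : ℤ) - k) :=
  statement7_general Φ hrefl f hf Pos hPos w₀ hw₀ V hVW hV s hs
end
end

section
/- Assume no simple root is compact, i.e. Σ ∩ Φ_K = ∅. Let A, D ⊆ W be subsets containing the identity e of W, set 𝒱(A,D,0) = {w ∈ A ∩ D : l(w) = l_K(w)}, assume 𝒱(A,D,0) satisfies condition (⋆), and let s be a sign function for 𝒱(A,D,0). Then the degree-zero differential d : C⁰𝒱(A,D,0) → C¹𝒱(A,D,0) is the zero map, and H⁰(𝒱(A,D,0)) is one-dimensional, spanned by the class of the basis element e; in particular H⁰(𝒱(A,D,0)) ≠ 0. -/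
open Finset
open scoped RealInnerProductSpace

noncomputable section

variable {E : Type*} [NormedAddCommGroup E] [InnerProductSpace ℝ E] [FiniteDimensional ℝ E]

variable [DecidableEq E]

/-!
Choose a minimal set `Δ ⊆ Φ⁺` whose nonnegative cone contains `Φ⁺`; its elements are
pairwise obtuse, and a reflection `σ_δ`, `δ ∈ Δ`, permutes `Φ⁺ \ {δ}`. Hence `W` is generated
by these reflections, and the exchange condition shows that `e` is the only element of `W` of
length `0`. An element `x` with `l(x) = l_K(x) = 1` inverts exactly one positive root `β`, which
is then compact; if `β = γ + δ` with `γ, δ ∈ Φ⁺`, then `x⁻¹` keeps `γ` and `δ`, hence `β`,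
positive, so `β` would be an indecomposable compact root. Thus `𝒱` has `e` as its only element
of degree `0` and none of degree `1`, so `d` vanishes on `C⁰𝒱 = ℂ e` and `C⁻¹𝒱 = 0`.
-/
section ReflectionsAndCones

omit [FiniteDimensional ℝ E] [DecidableEq E]

lemma sigmaRefl_apply (α v : E) :
    sigmaRefl α v = v - (2 * ⟪v, α⟫ / ⟪α, α⟫) • α := by
  rcases eq_or_ne α 0 with rfl | hα
  · simp [sigmaRefl, Submodule.span_zero_singleton,
      Submodule.reflection_mem_subspace_eq_self (Submodule.mem_top (x := v))]
  · rw [sigmaRefl, Submodule.reflection_orthogonal_apply, Submodule.reflection_singleton_apply,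
      real_inner_self_eq_norm_sq α, real_inner_comm]
    rw [mul_div_assoc, two_mul, add_smul]
    simp only [RCLike.ofReal_real_eq_id, id_eq]
    abel

lemma sigmaRefl_self (α : E) : sigmaRefl α α = -α :=
  Submodule.reflection_orthogonalComplement_singleton_eq_neg α

lemma sigmaRefl_neg (α : E) : sigmaRefl (-α) = sigmaRefl α := by
  ext v
  simp [sigmaRefl_apply, inner_neg_right, neg_div]

lemma sigmaRefl_mul_self (α : E) : sigmaRefl α * sigmaRefl α = 1 :=
  Submodule.reflection_mul_reflection _

lemma sigmaRefl_inv (α : E) : (sigmaRefl α)⁻¹ = sigmaRefl α :=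
  Submodule.reflection_inv

lemma sigmaRefl_map (u : E ≃ₗᵢ[ℝ] E) (α : E) :
    sigmaRefl (u α) = u * sigmaRefl α * u⁻¹ := by
  ext v
  change _ = u (sigmaRefl α (u.symm v))
  rw [sigmaRefl_apply, sigmaRefl_apply, map_sub, map_smul, u.apply_symm_apply,
    ← u.inner_map_map (u.symm v), u.apply_symm_apply, u.inner_map_map]

lemma exists_list_of_mem_weyl {S : Finset E} {w : E ≃ₗᵢ[ℝ] E} (hw : w ∈ Weyl S) :
    ∃ l : List E, (∀ α ∈ l, α ∈ S) ∧ w = (l.map sigmaRefl).prod := by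
  induction hw using Subgroup.closure_induction'' with
  | mem x hx | inv_mem x hx =>
    obtain ⟨α, hα, rfl⟩ := hx
    exact ⟨[α], by simpa using hα, by simp [sigmaRefl_inv]⟩
  | one => exact ⟨[], by simp, rfl⟩
  | mul x y _ _ ihx ihy =>
    obtain ⟨l₁, hl₁, rfl⟩ := ihx
    obtain ⟨l₂, hl₂, rfl⟩ := ihy
    refine ⟨l₁ ++ l₂, fun α hα => ?_, by simp⟩
    rcases List.mem_append.1 hα with h | h
    exacts [hl₁ α h, hl₂ α h]

lemma inner_nonneg_of_mem_hull {S : Set E} {v x : E} (hS : ∀ γ ∈ S, 0 ≤ ⟪v, γ⟫)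
    (hx : x ∈ PointedCone.hull ℝ S) : 0 ≤ ⟪v, x⟫ := by
  induction hx using Submodule.span_induction with
  | mem x h => exact hS x h
  | zero => simp
  | add x y _ _ hx hy => rw [inner_add_right]; positivity
  | smul a x _ hx => rw [← Nonneg.coe_smul, real_inner_smul_right]; exact mul_nonneg a.2 hx

lemma mem_hull_finset_iff {S : Finset E} {x : E} :
    x ∈ PointedCone.hull ℝ (S : Set E) ↔ ∃ c : E → ℝ, (∀ γ, 0 ≤ c γ) ∧ ∑ γ ∈ S, c γ • γ = x := by
  constructor
  · intro hx
    obtain ⟨c, -, rfl⟩ := Submodule.mem_span_finset.1 hx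
    exact ⟨fun γ => c γ, fun γ => (c γ).2, by simp only [Nonneg.coe_smul]⟩
  · rintro ⟨c, hc, rfl⟩
    exact Submodule.sum_mem _ fun γ hγ =>
      PointedCone.smul_mem _ (hc γ) (PointedCone.subset_hull hγ)

lemma eq_zero_of_mem_hull_of_inner_eq_zero {S : Finset E} {f x : E}
    (hS : ∀ γ ∈ S, 0 < ⟪f, γ⟫) (hx : x ∈ PointedCone.hull ℝ (S : Set E)) (hfx : ⟪f, x⟫ = 0) :
    x = 0 := by
  obtain ⟨c, hc, rfl⟩ := mem_hull_finset_iff.1 hx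
  simp only [inner_sum, real_inner_smul_right] at hfx
  have hc0 : ∀ γ ∈ S, c γ = 0 := fun γ hγ =>
    (mul_eq_zero.1 ((Finset.sum_eq_zero_iff_of_nonneg fun δ hδ =>
      mul_nonneg (hc δ) (hS δ hδ).le).1 hfx γ hγ)).resolve_right (hS γ hγ).ne'
  exact Finset.sum_eq_zero fun γ hγ => by rw [hc0 γ hγ, zero_smul]

lemma exists_mem_inner_pos_of_mem_hull {S : Set E} {x : E}
    (hx : x ∈ PointedCone.hull ℝ S) (hx0 : x ≠ 0) : ∃ γ ∈ S, 0 < ⟪x, γ⟫ := by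
  by_contra! h
  have := inner_nonneg_of_mem_hull (v := -x)
    (fun γ hγ => by rw [inner_neg_left]; linarith [h γ hγ]) hx
  rw [inner_neg_left, neg_nonneg] at this
  exact hx0 (real_inner_self_nonpos.1 this)

lemma eq_zero_of_mem_hull_of_eq_smul {S : Set E} {f α u : E} {r : ℝ}
    (hfS : ∀ γ ∈ S, 0 ≤ ⟪f, γ⟫) (hαS : ∀ γ ∈ S, ⟪α, γ⟫ ≤ 0) (hfα : 0 < ⟪f, α⟫)
    (hu : u ∈ PointedCone.hull ℝ S) (hur : u = r • α) : u = 0 := by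
  have hfu : 0 ≤ ⟪f, u⟫ := inner_nonneg_of_mem_hull hfS hu
  have hαu : 0 ≤ ⟪-α, u⟫ :=
    inner_nonneg_of_mem_hull (fun γ hγ => by rw [inner_neg_left]; linarith [hαS γ hγ]) hu
  rw [hur, real_inner_smul_right] at hfu
  have hr : 0 ≤ r := nonneg_of_mul_nonneg_left hfu hfα
  refine real_inner_self_nonpos.1 ?_
  nth_rw 1 [hur]
  rw [real_inner_smul_left]
  rw [inner_neg_left] at hαu
  nlinarith

end ReflectionsAndCones

section RootSystems

omit [FiniteDimensional ℝ E]

lemma mem_hull_erase_of_smul_sub_mem_hull {Δ : Finset E} {f β x : E} {t : ℝ}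
    (hf : ∀ γ ∈ Δ, 0 < ⟪f, γ⟫) (hβ : β ∈ Δ) (hx : x ∈ PointedCone.hull ℝ ↑(Δ.erase β))
    (hfx : 0 < ⟪f, x⟫) (h : t • β - x ∈ PointedCone.hull ℝ ↑Δ) :
    β ∈ PointedCone.hull ℝ ↑(Δ.erase β) := by
  rw [← Finset.insert_erase hβ, Finset.coe_insert, Submodule.mem_span_insert] at h
  obtain ⟨a, z, hz, hsum⟩ := h
  have key : (t - a) • β = x + z := by
    rw [← Nonneg.coe_smul] at hsum
    rw [sub_smul]
    linear_combination (norm := module) hsum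
  have hfz : 0 ≤ ⟪f, z⟫ :=
    inner_nonneg_of_mem_hull (fun γ hγ => (hf γ (Finset.mem_of_mem_erase hγ)).le) hz
  rcases lt_or_ge 0 (t - a) with hpos | hle
  · exact (PointedCone.smul_mem_iff _ hpos).1 (key ▸ add_mem hx hz)
  · have := congrArg (⟪f, ·⟫) key
    simp only [real_inner_smul_right, inner_add_right] at this
    nlinarith [hf β hβ]

lemma mem_image_iff_symm_apply_mem {w : E ≃ₗᵢ[ℝ] E} {S : Finset E} {x : E} :
    x ∈ S.image w ↔ w.symm x ∈ S := by
  rw [Finset.mem_image]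
  exact ⟨by rintro ⟨y, hy, rfl⟩; simpa using hy, fun h => ⟨_, h, w.apply_symm_apply x⟩⟩

lemma lenK_le_len (Pos ΦK : Finset E) (w : E ≃ₗᵢ[ℝ] E) : lenK Pos ΦK w ≤ len Pos w :=
  Finset.card_le_card Finset.inter_subset_left

structure IsPositiveSystem (Φ : Finset E) (f : E) (Pos : Finset E) : Prop where
  zero_notMem : (0 : E) ∉ Φ
  image_sigmaRefl : ∀ α ∈ Φ, Φ.image (sigmaRefl α) = Φ
  reduced : ∀ α ∈ Φ, {x : E | x ∈ Φ ∧ ∃ t : ℝ, x = t • α} = {α, -α}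
  inner_ne_zero : ∀ α ∈ Φ, ⟪f, α⟫ ≠ 0
  eq_filter : Pos = Φ.filter fun α => 0 < ⟪f, α⟫

-- For non-crystallographic `Φ` these simple roots need not be the indecomposable positive roots.
structure IsSimpleSystem (Pos Δ : Finset E) : Prop where
  subset : Δ ⊆ Pos
  subset_hull : (Pos : Set E) ⊆ PointedCone.hull ℝ (Δ : Set E)
  inner_nonpos : ∀ α ∈ Δ, ∀ β ∈ Δ, α ≠ β → ⟪α, β⟫ ≤ 0

namespace IsPositiveSystem

variable {Φ : Finset E} {f : E} {Pos : Finset E} (hΦ : IsPositiveSystem Φ f Pos)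
include hΦ

lemma sigmaRefl_mem {α β : E} (hα : α ∈ Φ) (hβ : β ∈ Φ) : sigmaRefl α β ∈ Φ :=
  hΦ.image_sigmaRefl α hα ▸ Finset.mem_image_of_mem _ hβ

lemma neg_mem {α : E} (hα : α ∈ Φ) : -α ∈ Φ :=
  sigmaRefl_self α ▸ hΦ.sigmaRefl_mem hα hα

lemma ne_zero {α : E} (hα : α ∈ Φ) : α ≠ 0 :=
  fun h => hΦ.zero_notMem (h ▸ hα)

lemma mem_pos_iff {α : E} : α ∈ Pos ↔ α ∈ Φ ∧ 0 < ⟪f, α⟫ := by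
  rw [hΦ.eq_filter, Finset.mem_filter]

lemma pos_subset : Pos ⊆ Φ := fun _ hα => (hΦ.mem_pos_iff.1 hα).1

lemma inner_pos {α : E} (hα : α ∈ Pos) : 0 < ⟪f, α⟫ := (hΦ.mem_pos_iff.1 hα).2

lemma mem_negSet_iff {α : E} : α ∈ negSet Pos ↔ α ∈ Φ ∧ ⟪f, α⟫ < 0 := by
  simp only [negSet, Finset.mem_image]
  constructor
  · rintro ⟨β, hβ, rfl⟩
    exact ⟨hΦ.neg_mem (hΦ.pos_subset hβ), by rw [inner_neg_right]; linarith [hΦ.inner_pos hβ]⟩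
  · rintro ⟨hα, hfα⟩
    exact ⟨-α, hΦ.mem_pos_iff.2 ⟨hΦ.neg_mem hα, by rw [inner_neg_right]; linarith⟩, neg_neg α⟩

lemma neg_mem_pos_iff {α : E} : -α ∈ Pos ↔ α ∈ negSet Pos := by
  rw [hΦ.mem_pos_iff, hΦ.mem_negSet_iff, inner_neg_right, neg_pos]
  exact ⟨fun h => ⟨neg_neg α ▸ hΦ.neg_mem h.1, h.2⟩, fun h => ⟨hΦ.neg_mem h.1, h.2⟩⟩

lemma mem_pos_or_mem_negSet {α : E} (hα : α ∈ Φ) : α ∈ Pos ∨ α ∈ negSet Pos := by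
  rw [hΦ.mem_pos_iff, hΦ.mem_negSet_iff]
  rcases (hΦ.inner_ne_zero α hα).lt_or_gt with h | h
  exacts [Or.inr ⟨hα, h⟩, Or.inl ⟨hα, h⟩]

lemma notMem_negSet {α : E} (hα : α ∈ Pos) : α ∉ negSet Pos := fun h =>
  (hΦ.inner_pos hα).not_gt (hΦ.mem_negSet_iff.1 h).2

lemma apply_mem_of_mem_weyl {w : E ≃ₗᵢ[ℝ] E} (hw : w ∈ Weyl Φ) {α : E} (hα : α ∈ Φ) :
    w α ∈ Φ := by
  induction hw using Subgroup.closure_induction'' generalizing α with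
  | mem x hx | inv_mem x hx =>
    obtain ⟨β, hβ, rfl⟩ := hx
    simpa only [sigmaRefl_inv] using hΦ.sigmaRefl_mem hβ hα
  | one => exact hα
  | mul x y _ _ ihx ihy => exact ihx (ihy hα)

lemma exists_isSimpleSystem : ∃ Δ, IsSimpleSystem Pos Δ := by
  classical
  have hex : ∃ n, ∃ Δ ⊆ Pos, Δ.card = n ∧ (Pos : Set E) ⊆ PointedCone.hull ℝ (Δ : Set E) :=
    ⟨Pos.card, Pos, subset_rfl, rfl, PointedCone.subset_hull⟩
  obtain ⟨Δ, hsub, hcard, hhull⟩ := Nat.find_spec hex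
  have hfΔ : ∀ γ ∈ Δ, 0 < ⟪f, γ⟫ := fun γ hγ => hΦ.inner_pos (hsub hγ)
  have hmin : ∀ β ∈ Δ, β ∉ PointedCone.hull ℝ ↑(Δ.erase β) := by
    intro β hβ hmem
    refine Nat.find_min hex (hcard ▸ Finset.card_erase_lt_of_mem hβ)
      ⟨Δ.erase β, (Finset.erase_subset _ _).trans hsub, rfl, hhull.trans ?_⟩
    refine Submodule.span_le.2 fun γ hγ => ?_
    by_cases hγβ : γ = β
    · exact hγβ ▸ hmem
    · exact PointedCone.subset_hull (Finset.mem_erase.2 ⟨hγβ, hγ⟩)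
  refine ⟨Δ, hsub, hhull, fun α hα β hβ hne => ?_⟩
  by_contra! hαβ
  have hαΦ := hΦ.pos_subset (hsub hα)
  set c := 2 * ⟪β, α⟫ / ⟪α, α⟫
  have hc : 0 < c :=
    div_pos (by rw [real_inner_comm]; linarith) (real_inner_self_pos.2 (hΦ.ne_zero hαΦ))
  have hσ : sigmaRefl α β = β - c • α := sigmaRefl_apply α β
  -- Reflecting `β` in `α` would let one of `α`, `β` be generated by the rest of `Δ`.
  rcases hΦ.mem_pos_or_mem_negSet (hΦ.sigmaRefl_mem hαΦ (hΦ.pos_subset (hsub hβ))) with h | h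
  · refine hmin β hβ (mem_hull_erase_of_smul_sub_mem_hull (t := 1) hfΔ hβ
      (PointedCone.smul_mem _ hc.le (PointedCone.subset_hull (Finset.mem_erase.2 ⟨hne, hα⟩)))
      (by rw [real_inner_smul_right]; exact mul_pos hc (hfΔ α hα)) ?_)
    rw [one_smul, ← hσ]
    exact hhull h
  · refine hmin α hα (mem_hull_erase_of_smul_sub_mem_hull (t := c) hfΔ hα
      (PointedCone.subset_hull (Finset.mem_erase.2 ⟨hne.symm, hβ⟩)) (hfΔ β hβ) ?_)
    have := hΦ.neg_mem_pos_iff.2 h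
    rw [hσ, neg_sub] at this
    exact hhull this

section SimpleSystem

variable {Δ : Finset E} (hΔ : IsSimpleSystem Pos Δ)
include hΔ

lemma sigmaRefl_mem_pos {α β : E} (hα : α ∈ Δ) (hβ : β ∈ Pos) (hne : β ≠ α) :
    sigmaRefl α β ∈ Pos := by
  have hαΦ := hΦ.pos_subset (hΔ.subset hα)
  refine (hΦ.mem_pos_or_mem_negSet (hΦ.sigmaRefl_mem hαΦ (hΦ.pos_subset hβ))).resolve_right
    fun hneg => ?_
  set S : Set E := ↑(Δ.erase α)
  have hfS : ∀ γ ∈ S, 0 < ⟪f, γ⟫ := fun γ hγ =>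
    hΦ.inner_pos (hΔ.subset (Finset.mem_of_mem_erase hγ))
  have hsplit : ∀ v ∈ Pos, ∃ a : ℝ, ∃ y ∈ PointedCone.hull ℝ S, v = a • α + y := by
    intro v hv
    have : v ∈ PointedCone.hull ℝ ↑Δ := hΔ.subset_hull hv
    rw [← Finset.insert_erase hα, Finset.coe_insert, Submodule.mem_span_insert] at this
    obtain ⟨a, y, hy, rfl⟩ := this
    exact ⟨a, y, hy, (Nonneg.coe_smul a α).symm ▸ rfl⟩
  set c := 2 * ⟪β, α⟫ / ⟪α, α⟫
  have hσ : sigmaRefl α β = β - c • α := sigmaRefl_apply α β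
  obtain ⟨a, y, hy, hβy⟩ := hsplit β hβ
  obtain ⟨b, z, hz, hz'⟩ := hsplit (c • α - β) (by
    rw [← neg_sub, ← hσ]; exact hΦ.neg_mem_pos_iff.2 hneg)
  -- `y + z` lies both in the cone on `Δ \ {α}` and on the line `ℝ α`, so it vanishes.
  have hyz : y + z = (c - a - b) • α := by
    linear_combination (norm := module) -hz' - hβy
  have hyz0 := eq_zero_of_mem_hull_of_eq_smul (fun γ hγ => (hfS γ hγ).le)
    (fun γ hγ => hΔ.inner_nonpos α hα γ (Finset.mem_of_mem_erase hγ)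
      (Finset.ne_of_mem_erase hγ).symm) (hΦ.inner_pos (hΔ.subset hα)) (add_mem hy hz) hyz
  have hy0 : y = 0 := by
    refine eq_zero_of_mem_hull_of_inner_eq_zero hfS hy ?_
    have := congrArg (⟪f, ·⟫) hyz0
    simp only [inner_add_right, inner_zero_right] at this
    linarith [inner_nonneg_of_mem_hull (fun γ hγ => (hfS γ hγ).le) hy,
      inner_nonneg_of_mem_hull (fun γ hγ => (hfS γ hγ).le) hz]
  have hβα : β ∈ ({α, -α} : Set E) :=
    hΦ.reduced α hαΦ ▸ ⟨hΦ.pos_subset hβ, a, by rw [hβy, hy0, add_zero]⟩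
  rcases hβα with h | h
  · exact hne h
  · exact hΦ.notMem_negSet (hΔ.subset hα) (hΦ.neg_mem_pos_iff.1 (h ▸ hβ))

lemma sigmaRefl_mem_weyl_of_mem_pos {β : E} (hβ : β ∈ Pos) : sigmaRefl β ∈ Weyl Δ := by
  classical
  -- A root of least height `⟪f, ·⟫` in the `Weyl Δ`-orbit of `β` inside `Pos` is simple.
  set O := Pos.filter fun γ => ∃ w ∈ Weyl Δ, w β = γ
  obtain ⟨γ, hγO, hmin⟩ :=
    O.exists_min_image (⟪f, ·⟫) ⟨β, Finset.mem_filter.2 ⟨hβ, 1, one_mem _, rfl⟩⟩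
  obtain ⟨hγ, w, hw, rfl⟩ := Finset.mem_filter.1 hγO
  obtain ⟨δ, hδ, hwβδ⟩ := exists_mem_inner_pos_of_mem_hull (hΔ.subset_hull hγ)
    (hΦ.ne_zero (hΦ.pos_subset hγ))
  have hσδ : sigmaRefl δ ∈ Weyl Δ := Subgroup.subset_closure ⟨δ, hδ, rfl⟩
  by_cases hwβ : w β = δ
  · have hconj : sigmaRefl β = w⁻¹ * sigmaRefl (w β) * w := by
      simpa using sigmaRefl_map w⁻¹ (w β)
    rw [hconj, hwβ]
    exact mul_mem (mul_mem (inv_mem hw) hσδ) hw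
  · have hlower := hmin (sigmaRefl δ (w β)) (Finset.mem_filter.2
      ⟨hΦ.sigmaRefl_mem_pos hΔ hδ hγ hwβ, sigmaRefl δ * w, mul_mem hσδ hw, rfl⟩)
    have hδΦ := hΦ.pos_subset (hΔ.subset hδ)
    rw [sigmaRefl_apply, inner_sub_right, real_inner_smul_right] at hlower
    have hc : 0 < 2 * ⟪w β, δ⟫ / ⟪δ, δ⟫ :=
      div_pos (by linarith) (real_inner_self_pos.2 (hΦ.ne_zero hδΦ))
    nlinarith [hΦ.inner_pos (hΔ.subset hδ)]

lemma weyl_le_weyl : Weyl Φ ≤ Weyl Δ := by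
  refine Subgroup.closure_le _ |>.2 ?_
  rintro _ ⟨α, hα, rfl⟩
  rcases hΦ.mem_pos_or_mem_negSet hα with h | h
  · exact hΦ.sigmaRefl_mem_weyl_of_mem_pos hΔ h
  · rw [← sigmaRefl_neg]
    exact hΦ.sigmaRefl_mem_weyl_of_mem_pos hΔ (hΦ.neg_mem_pos_iff.2 h)

lemma exists_eq_append_cons_of_apply_mem_negSet {l : List E} (hl : ∀ δ ∈ l, δ ∈ Δ) {β : E}
    (hβ : β ∈ Pos) (hneg : (l.map sigmaRefl).prod β ∈ negSet Pos) :
    ∃ a b : List E, ∃ γ : E, l = a ++ γ :: b ∧ (b.map sigmaRefl).prod β = γ := by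
  induction l with
  | nil => exact absurd hneg (hΦ.notMem_negSet hβ)
  | cons γ t ih =>
    have ht : ∀ δ ∈ t, δ ∈ Δ := fun δ hδ => hl δ (List.mem_cons_of_mem _ hδ)
    by_cases htβ : (t.map sigmaRefl).prod β ∈ negSet Pos
    · obtain ⟨a, b, γ', rfl, hb⟩ := ih ht htβ
      exact ⟨γ :: a, b, γ', rfl, hb⟩
    · refine ⟨[], t, γ, rfl, by_contra fun hne => ?_⟩
      have htW : (t.map sigmaRefl).prod ∈ Weyl Φ := Subgroup.list_prod_mem _ fun _ hx => by
        obtain ⟨δ, hδ, rfl⟩ := List.mem_map.1 hx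
        exact Subgroup.subset_closure ⟨δ, hΦ.pos_subset (hΔ.subset (ht δ hδ)), rfl⟩
      have htβΦ := hΦ.apply_mem_of_mem_weyl htW (hΦ.pos_subset hβ)
      have htβ' := (hΦ.mem_pos_or_mem_negSet htβΦ).resolve_right htβ
      exact hΦ.notMem_negSet (hΦ.sigmaRefl_mem_pos hΔ (hl γ List.mem_cons_self) htβ' hne)
        (by simpa using hneg)

lemma list_prod_eq_one (l : List E) (hl : ∀ δ ∈ l, δ ∈ Δ)
    (hpos : ∀ y ∈ Pos, (l.map sigmaRefl).prod y ∈ Pos) : (l.map sigmaRefl).prod = 1 := by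
  rcases l.eq_nil_or_concat with rfl | ⟨L, β, rfl⟩
  · rfl
  simp only [List.concat_eq_append] at hl hpos ⊢
  have hβ : β ∈ Δ := hl β (by simp)
  have hw : ((L ++ [β]).map sigmaRefl).prod = (L.map sigmaRefl).prod * sigmaRefl β := by simp
  have hLβ : (L.map sigmaRefl).prod β ∈ negSet Pos := by
    have := hpos β (hΔ.subset hβ)
    rw [hw, LinearIsometryEquiv.coe_mul, Function.comp_apply, sigmaRefl_self, map_neg] at this
    simpa using hΦ.neg_mem_pos_iff.1 this
  obtain ⟨a, b, γ, rfl, hγ⟩ := hΦ.exists_eq_append_cons_of_apply_mem_negSet hΔ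
    (fun δ hδ => hl δ (List.mem_append_left _ hδ)) (hΔ.subset hβ) hLβ
  -- Exchange condition: `σ_γ` cancels against `σ_β` since `σ_γ = u σ_β u⁻¹` for `u = ∏ b`.
  have hdel : ((a ++ γ :: b ++ [β]).map sigmaRefl).prod = ((a ++ b).map sigmaRefl).prod := by
    simp only [List.map_append, List.map_cons, List.prod_append, List.prod_cons, List.map_nil,
      List.prod_nil, mul_one, ← hγ, sigmaRefl_map]
    simp only [mul_assoc, inv_mul_cancel_left, sigmaRefl_mul_self, mul_one]
  rw [hdel] at hpos ⊢
  exact list_prod_eq_one (a ++ b)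
    (fun δ hδ => hl δ (by simp only [List.mem_append, List.mem_cons] at hδ ⊢; tauto)) hpos
termination_by l.length
decreasing_by subst_vars; simp

end SimpleSystem

lemma len_one : len Pos 1 = 0 := by
  refine Finset.card_eq_zero.2 (Finset.eq_empty_of_forall_notMem fun α hα => ?_)
  obtain ⟨hα, hαneg⟩ := Finset.mem_inter.1 hα
  exact hΦ.notMem_negSet hα (by simpa using hαneg)

lemma lenK_one (ΦK : Finset E) : lenK Pos ΦK 1 = 0 :=
  Nat.le_zero.1 (hΦ.len_one ▸ lenK_le_len Pos ΦK 1)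

theorem eq_one_of_forall_apply_mem_pos {w : E ≃ₗᵢ[ℝ] E} (hw : w ∈ Weyl Φ)
    (h : ∀ y ∈ Pos, w y ∈ Pos) : w = 1 := by
  obtain ⟨Δ, hΔ⟩ := hΦ.exists_isSimpleSystem
  obtain ⟨l, hl, rfl⟩ := exists_list_of_mem_weyl (hΦ.weyl_le_weyl hΔ hw)
  exact hΦ.list_prod_eq_one hΔ l hl h

theorem eq_one_of_len_eq_zero {w : E ≃ₗᵢ[ℝ] E} (hw : w ∈ Weyl Φ) (hlen : len Pos w = 0) :
    w = 1 := by
  refine inv_eq_one.1 (hΦ.eq_one_of_forall_apply_mem_pos (inv_mem hw) fun y hy => ?_)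
  have hy' : w.symm y ∉ negSet Pos := fun h => Finset.notMem_empty y <|
    Finset.card_eq_zero.1 hlen ▸ Finset.mem_inter.2 ⟨hy, mem_image_iff_symm_apply_mem.2 h⟩
  exact (hΦ.mem_pos_or_mem_negSet
    (hΦ.apply_mem_of_mem_weyl (inv_mem hw) (hΦ.pos_subset hy))).resolve_right hy'

theorem len_ne_one_of_len_eq_lenK {ΦK : Finset E}
    (hK : ∀ α ∈ Pos, (¬ ∃ β ∈ Pos, ∃ γ ∈ Pos, α = β + γ) → α ∉ ΦK)
    {x : E ≃ₗᵢ[ℝ] E} (hx : x ∈ Weyl Φ) (heq : len Pos x = lenK Pos ΦK x) : len Pos x ≠ 1 := by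
  intro h1
  set T := Pos ∩ (negSet Pos).image x
  obtain ⟨β, hT⟩ := Finset.card_eq_one.1 (show T.card = 1 from h1)
  have hTK : T ∩ ΦK = T := Finset.eq_of_subset_of_card_le Finset.inter_subset_left heq.le
  have hβT : β ∈ T := hT ▸ Finset.mem_singleton_self β
  have hβK : β ∈ ΦK := (Finset.mem_inter.1 (hTK.symm ▸ hβT : β ∈ T ∩ ΦK)).2
  obtain ⟨hβ, hβneg⟩ := Finset.mem_inter.1 hβT
  refine hK β hβ ?_ hβK
  rintro ⟨γ, hγ, δ, hδ, rfl⟩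
  -- `x⁻¹` makes only the positive root `γ + δ` negative, so it keeps `γ` and `δ` positive.
  have hsymm_pos : ∀ ε ∈ Pos, ε ≠ γ + δ → 0 < ⟪f, x.symm ε⟫ := by
    intro ε hε hne
    rcases hΦ.mem_pos_or_mem_negSet (hΦ.apply_mem_of_mem_weyl (inv_mem hx) (hΦ.pos_subset hε))
      with h | h
    · exact hΦ.inner_pos h
    · exact absurd (Finset.mem_singleton.1 (hT ▸ Finset.mem_inter.2
        ⟨hε, mem_image_iff_symm_apply_mem.2 h⟩)) hne
  have hγ' := hsymm_pos γ hγ fun h => hΦ.ne_zero (hΦ.pos_subset hδ) (by simpa using h)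
  have hδ' := hsymm_pos δ hδ fun h => hΦ.ne_zero (hΦ.pos_subset hγ) (by simpa using h)
  have := (hΦ.mem_negSet_iff.1 (mem_image_iff_symm_apply_mem.1 hβneg)).2
  rw [map_add, inner_add_right] at this
  linarith

end IsPositiveSystem

section DegreeZero

variable {Pos : Finset E} {V : Finset (E ≃ₗᵢ[ℝ] E)} {s : (E ≃ₗᵢ[ℝ] E) → (E ≃ₗᵢ[ℝ] E) → ℂ}
  (e : V)

lemma cqSub_zero_eq_span (he : ∀ v : V, len Pos v = 0 ↔ v = e) :
    CqSub Pos V 0 = ℂ ∙ Finsupp.single e 1 := by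
  have : {v : V | (len Pos v : ℤ) = 0} = {e} := by
    ext v
    simp [he]
  rw [CqSub, this, Finsupp.supported_eq_span_single, Set.image_singleton]

lemma bfull_zero_eq_bot : Bfull Pos V s 0 = ⊥ := by
  have : {v : V | (len Pos v : ℤ) = 0 - 1} = ∅ := by
    ext v
    simp only [Set.mem_ofPred_eq, Set.mem_empty_iff_false, iff_false]
    omega
  rw [Bfull, CqSub, this, Finsupp.supported_empty, Submodule.map_bot]

omit [DecidableEq E] in
lemma totalDiff_single_eq_zero {y : V} (hy : ∀ x : V, s x y = 0) (c : ℂ) :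
    totalDiff V s (Finsupp.single y c) = 0 := by
  simp [totalDiff, hy]

lemma zq_zero_eq_span (he : ∀ v : V, len Pos v = 0 ↔ v = e) (hs : ∀ x : V, s x e = 0) :
    Zq Pos V s 0 = ℂ ∙ Finsupp.single e 1 := by
  rw [Zq, cqSub_zero_eq_span e he, inf_eq_left, Submodule.span_singleton_le_iff_mem]
  exact totalDiff_single_eq_zero hs 1

lemma mkQ_single_ne_zero : (Bfull Pos V s 0).mkQ (Finsupp.single e 1) ≠ 0 := by
  simp [bfull_zero_eq_bot]

lemma cohomology_zero_eq_span (he : ∀ v : V, len Pos v = 0 ↔ v = e)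
    (hs : ∀ x : V, s x e = 0) :
    cohomology Pos V s 0 = ℂ ∙ (Bfull Pos V s 0).mkQ (Finsupp.single e 1) := by
  rw [cohomology, zq_zero_eq_span e he hs, Submodule.map_span, Set.image_singleton]

end DegreeZero

end RootSystems

theorem statement10_general [DecidableEq (E ≃ₗᵢ[ℝ] E)]
    (Φ : Finset E) (h0 : (0 : E) ∉ Φ)
    (hrefl : ∀ α ∈ Φ, Φ.image (sigmaRefl α) = Φ)
    (hred : ∀ α ∈ Φ, {x : E | x ∈ Φ ∧ ∃ t : ℝ, x = t • α} = {α, -α})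
    (f : E) (hf : ∀ α ∈ Φ, ⟪f, α⟫ ≠ 0)
    (Pos : Finset E) (hPos : Pos = Φ.filter fun α => 0 < ⟪f, α⟫)
    (ΦK : Finset E)
    (hSigmaK : ∀ α ∈ Pos, (¬ ∃ β ∈ Pos, ∃ γ ∈ Pos, α = β + γ) → α ∉ ΦK)
    (A D : Finset (E ≃ₗᵢ[ℝ] E))
    (hAW : ↑A ⊆ (Weyl Φ : Set (E ≃ₗᵢ[ℝ] E)))
    (hA1 : (1 : E ≃ₗᵢ[ℝ] E) ∈ A) (hD1 : (1 : E ≃ₗᵢ[ℝ] E) ∈ D)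
    (V : Finset (E ≃ₗᵢ[ℝ] E))
    (hVdef : V = (A ∩ D).filter fun w => len Pos w = lenK Pos ΦK w)
    (s : (E ≃ₗᵢ[ℝ] E) → (E ≃ₗᵢ[ℝ] E) → ℂ) (hs : IsSignFunction Φ Pos ↑V s) :
    (∀ m ∈ CqSub Pos V 0, totalDiff V s m = 0) ∧
    ∃ h1 : (1 : E ≃ₗᵢ[ℝ] E) ∈ V,
      Finsupp.single (⟨1, h1⟩ : ↥V) (1 : ℂ) ∈ Zq Pos V s 0 ∧
      cohomDim Pos V s 0 = 1 ∧
      Submodule.span ℂ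
          {(Bfull Pos V s 0).mkQ (Finsupp.single (⟨1, h1⟩ : ↥V) (1 : ℂ))} =
        cohomology Pos V s 0 ∧
      (Bfull Pos V s 0).mkQ (Finsupp.single (⟨1, h1⟩ : ↥V) (1 : ℂ)) ≠ 0 := by
  have hΦ : IsPositiveSystem Φ f Pos := ⟨h0, hrefl, hred, hf, hPos⟩
  have hV : ∀ v ∈ V, v ∈ Weyl Φ ∧ len Pos v = lenK Pos ΦK v := fun v hv => by
    rw [hVdef, Finset.mem_filter, Finset.mem_inter] at hv
    exact ⟨hAW hv.1.1, hv.2⟩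
  have h1V : (1 : E ≃ₗᵢ[ℝ] E) ∈ V := by
    rw [hVdef, Finset.mem_filter, Finset.mem_inter, hΦ.len_one, hΦ.lenK_one]
    exact ⟨⟨hA1, hD1⟩, rfl⟩
  set e : V := ⟨1, h1V⟩
  have he : ∀ v : V, len Pos v = 0 ↔ v = e := fun v =>
    ⟨fun h => Subtype.ext (hΦ.eq_one_of_len_eq_zero (hV v v.2).1 h),
      by rintro rfl; exact hΦ.len_one⟩
  have hse : ∀ x : V, s x e = 0 := fun x => hs.2.1 x x.2 1 h1V fun harr =>
    hΦ.len_ne_one_of_len_eq_lenK hSigmaK (hV x x.2).1 (hV x x.2).2 (by rw [harr.2, hΦ.len_one])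
  refine ⟨fun m hm => ?_, h1V, ?_, ?_, (cohomology_zero_eq_span e he hse).symm,
    mkQ_single_ne_zero e⟩
  · obtain ⟨c, rfl⟩ := Submodule.mem_span_singleton.1 (cqSub_zero_eq_span e he ▸ hm)
    rw [map_smul, totalDiff_single_eq_zero hse, smul_zero]
  · rw [zq_zero_eq_span e he hse]
    exact Submodule.mem_span_singleton_self _
  · rw [cohomDim, cohomology_zero_eq_span e he hse]
    exact finrank_span_singleton (mkQ_single_ne_zero e)

theorem statement10 [DecidableEq (E ≃ₗᵢ[ℝ] E)]
    (Φ : Finset E) (h0 : (0 : E) ∉ Φ)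
    (hrefl : ∀ α ∈ Φ, Φ.image (sigmaRefl α) = Φ)
    (hred : ∀ α ∈ Φ, {x : E | x ∈ Φ ∧ ∃ t : ℝ, x = t • α} = {α, -α})
    (f : E) (hf : ∀ α ∈ Φ, ⟪f, α⟫ ≠ 0)
    (Pos : Finset E) (hPos : Pos = Φ.filter fun α => 0 < ⟪f, α⟫)
    (ΦK : Finset E) (hKsub : ΦK ⊆ Φ) (hKsym : ΦK.image (fun x => -x) = ΦK)
    (hSigmaK : ∀ α ∈ Pos, (¬ ∃ β ∈ Pos, ∃ γ ∈ Pos, α = β + γ) → α ∉ ΦK)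
    (A D : Finset (E ≃ₗᵢ[ℝ] E))
    (hAW : ↑A ⊆ (Weyl Φ : Set (E ≃ₗᵢ[ℝ] E))) (hDW : ↑D ⊆ (Weyl Φ : Set (E ≃ₗᵢ[ℝ] E)))
    (hA1 : (1 : E ≃ₗᵢ[ℝ] E) ∈ A) (hD1 : (1 : E ≃ₗᵢ[ℝ] E) ∈ D)
    (V : Finset (E ≃ₗᵢ[ℝ] E))
    (hVdef : V = (A ∩ D).filter fun w => len Pos w = lenK Pos ΦK w)
    (hV : StarCond Φ Pos ↑V)
    (s : (E ≃ₗᵢ[ℝ] E) → (E ≃ₗᵢ[ℝ] E) → ℂ) (hs : IsSignFunction Φ Pos ↑V s) :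
    (∀ m ∈ CqSub Pos V 0, totalDiff V s m = 0) ∧
    ∃ h1 : (1 : E ≃ₗᵢ[ℝ] E) ∈ V,
      Finsupp.single (⟨1, h1⟩ : ↥V) (1 : ℂ) ∈ Zq Pos V s 0 ∧
      cohomDim Pos V s 0 = 1 ∧
      Submodule.span ℂ
          {(Bfull Pos V s 0).mkQ (Finsupp.single (⟨1, h1⟩ : ↥V) (1 : ℂ))} =
        cohomology Pos V s 0 ∧
      (Bfull Pos V s 0).mkQ (Finsupp.single (⟨1, h1⟩ : ↥V) (1 : ℂ)) ≠ 0 :=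
  statement10_general Φ h0 hrefl hred f hf Pos hPos ΦK hSigmaK A D hAW hA1 hD1 V hVdef s hs
end
end
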